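/- Let α₂ = {9/50, 189/250} and V_2 = 821/28125. Then for each j ∈ {1,2,3}, ∫_{J_j} min_{a ∈ S_j(α₂)} (x − a)² dP(x) = V_2 / 75, where S_j(α₂) denotes the image of α₂ under S_j. -/

import Mathlib

open MeasureTheory Filter
open scoped ENNReal

noncomputable section

/-- The three contractive similarities `S j x = x/5 + 2 j/5` (indexing `j = 0,1,2`
corresponds to the paper's `j = 1,2,3`). -/
def S (j : Fin 3) : ℝ → ℝ := fun x => x / 5 + 2 * (j : ℝ) / 5

/-- For a word `σ ∈ {1,2,3}^k`, the composition `S_σ = S_{σ 0} ∘ ⋯ ∘ S_{σ (k-1)}`. -/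
def Sword {k : ℕ} (σ : Fin k → Fin 3) : ℝ → ℝ :=
  (List.ofFn fun i => S (σ i)).foldr (· ∘ ·) id

/-- The basic interval `J j = S j ([0,1])`. -/
def J (j : Fin 3) : Set ℝ := S j '' Set.Icc 0 1

/-- The interval `J_σ = S_σ([0,1])`. -/
def Jword {k : ℕ} (σ : Fin k → Fin 3) : Set ℝ := Sword σ '' Set.Icc 0 1

/-- The distortion error `V(P; α) = ∫ min_{a ∈ α} (x - a)^2 dP(x)`. -/
def distortion (P : Measure ℝ) (α : Set ℝ) : ℝ :=
  ∫ x, (⨅ a : α, (x - (a : ℝ)) ^ 2) ∂P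

/-- The `n`-th quantization error
`V_n = inf { V(P; α) : α ⊂ ℝ finite, 1 ≤ card α ≤ n }`. -/
def quantErr (P : Measure ℝ) (n : ℕ) : ℝ :=
  sInf {e | ∃ α : Set ℝ, α.Finite ∧ α.Nonempty ∧ α.ncard ≤ n ∧ distortion P α = e}

/-- The self-similarity equation `P = (1/3)(P∘S₁⁻¹ + P∘S₂⁻¹ + P∘S₃⁻¹)`
characterizing the standard triadic Cantor distribution. -/
def IsTriadicCantor (P : Measure ℝ) : Prop :=
  P = (3 : ℝ≥0∞)⁻¹ • (P.map (S 0) + P.map (S 1) + P.map (S 2))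

/-!
Self-similarity turns every integral against `P` into `∫ f dP = 3⁻¹ ∑ⱼ ∫ f ∘ S j dP`. Each `S j`
pulls the complement of the `ε`-neighbourhood of `[0,1]` back into the complement of the
`5ε`-neighbourhood, so `P` lives on `[0,1]`; as `S i [0,1]` misses `J j` for `i ≠ j`, this gives
`∫_{J j} g dP = 3⁻¹ ∫ g ∘ S j dP`, and `S j` scales squared distances by `1/25`. What remains is
`V₂ = ∫ min_{a ∈ α₂} (x - a)² dP = 821/28125`, computed from the moments `E X = 1/2`,
`E X² = 13/36` that self-similarity also determines.
-/

open Set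

theorem ciInf_pair {α β : Type*} [ConditionallyCompleteLinearOrder α] (g : β → α) (p q : β) :
    ⨅ a : ({p, q} : Set β), g a = min (g p) (g q) := by
  rw [iInf, ← image_eq_range, image_pair, csInf_pair]

theorem min_sq_sub_eq_left {a b x : ℝ} (hab : a ≤ b) (hx : x ≤ (a + b) / 2) :
    min ((x - a) ^ 2) ((x - b) ^ 2) = (x - a) ^ 2 :=
  min_eq_left (by nlinarith)

theorem min_sq_sub_eq_right {a b x : ℝ} (hab : a ≤ b) (hx : (a + b) / 2 ≤ x) :
    min ((x - a) ^ 2) ((x - b) ^ 2) = (x - b) ^ 2 :=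
  min_eq_right (by nlinarith)

theorem Continuous.integrable_of_ae_mem {μ : Measure ℝ} [IsFiniteMeasure μ] {K : Set ℝ}
    (hK : IsCompact K) (hμ : ∀ᵐ x ∂μ, x ∈ K) {f : ℝ → ℝ} (hf : Continuous f) :
    Integrable f μ :=
  Measure.restrict_eq_self_of_ae_mem hμ ▸ hf.continuousOn.integrableOn_compact hK

section Moments

variable {μ : Measure ℝ} [IsProbabilityMeasure μ]

theorem integral_sub_const_eq (h1 : Integrable (fun x => x) μ) (b : ℝ) :
    ∫ x, (x - b) ∂μ = ∫ x, x ∂μ - b := by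
  rw [integral_sub h1 (integrable_const b), integral_const, probReal_univ, one_smul]

theorem integral_sq_sub_eq (h1 : Integrable (fun x => x) μ) (h2 : Integrable (· ^ 2) μ) (b : ℝ) :
    ∫ x, (x - b) ^ 2 ∂μ = ∫ x, x ^ 2 ∂μ - 2 * b * ∫ x, x ∂μ + b ^ 2 := by
  have hexp : ∀ x : ℝ, (x - b) ^ 2 = x ^ 2 - (2 * b * x - b ^ 2) := fun x => by ring
  have h3 : Integrable (fun x => 2 * b * x - b ^ 2) μ := (h1.const_mul _).sub (integrable_const _)
  simp_rw [hexp]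
  rw [integral_sub h2 h3,
    integral_sub (h1.const_mul (2 * b)) (integrable_const _), integral_const_mul,
    integral_const, probReal_univ, one_smul]
  ring

end Moments

theorem continuous_S (j : Fin 3) : Continuous (S j) := by
  unfold S; fun_prop

theorem S_sub_eq (j : Fin 3) (x a : ℝ) : S j x - a = (x - (5 * a - 2 * (j : ℝ))) / 5 := by
  unfold S; ring

theorem S_sub_S (j : Fin 3) (x y : ℝ) : S j x - S j y = (x - y) / 5 := by
  unfold S; ring

theorem S_eq_sub_div (j : Fin 3) (x : ℝ) : S j x = (x - -(2 * (j : ℝ))) / 5 := by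
  unfold S; ring

theorem S_mem_J_iff {i j : Fin 3} {x : ℝ} (hx : x ∈ Icc 0 1) : S i x ∈ J j ↔ i = j := by
  refine ⟨?_, fun h => h ▸ mem_image_of_mem _ hx⟩
  rintro ⟨y, hy, hxy⟩
  simp only [S] at hxy
  fin_cases i <;> fin_cases j <;> simp at hxy ⊢ <;> linarith [hx.1, hx.2, hy.1, hy.2]

theorem measurableSet_J (j : Fin 3) : MeasurableSet (J j) :=
  (isCompact_Icc.image (continuous_S j)).isClosed.measurableSet

theorem preimage_S_compl_Icc_subset (j : Fin 3) (ε : ℝ) :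
    S j ⁻¹' (Icc (-ε) (1 + ε))ᶜ ⊆ (Icc (-(5 * ε)) (1 + 5 * ε))ᶜ := by
  refine compl_subset_compl.2 fun x hx => ?_
  have hj : ((j : ℕ) : ℝ) ≤ 2 := by exact_mod_cast Nat.le_of_lt_succ j.is_lt
  simp only [S, mem_Icc] at hx ⊢
  constructor <;> linarith [hx.1, hx.2, (j : ℕ).cast_nonneg (α := ℝ)]

namespace IsTriadicCantor

variable {P : Measure ℝ} (hP : IsTriadicCantor P)
include hP

theorem measure_le_of_preimage_subset {A B : Set ℝ} (hA : MeasurableSet A)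
    (h : ∀ j, S j ⁻¹' A ⊆ B) : P A ≤ P B :=
  calc P A = 3⁻¹ * (P (S 0 ⁻¹' A) + P (S 1 ⁻¹' A) + P (S 2 ⁻¹' A)) := by
        conv_lhs => rw [hP]
        simp [Measure.map_apply (continuous_S _).measurable hA]
        ring
    _ ≤ 3⁻¹ * (3 * P B) := by
        gcongr
        calc _ ≤ P B + P B + P B := by gcongr <;> exact h _
          _ = 3 * P B := by ring
    _ = P B := ENNReal.inv_mul_cancel_left (by norm_num) (by norm_num)

theorem map_S_le (j : Fin 3) : P.map (S j) ≤ (3 : ℝ≥0∞) • P := by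
  have h3 : (3 : ℝ≥0∞) • P = P.map (S 0) + P.map (S 1) + P.map (S 2) := by
    conv_lhs => rw [hP]
    rw [smul_smul, ENNReal.mul_inv_cancel (by norm_num) (by norm_num), one_smul]
  rw [h3]
  fin_cases j
  · exact (Measure.le_add_right le_rfl).trans (Measure.le_add_right le_rfl)
  · exact (Measure.le_add_left le_rfl).trans (Measure.le_add_right le_rfl)
  · exact Measure.le_add_left le_rfl

theorem integral_eq_sum {f : ℝ → ℝ} (hf : Integrable f P) :
    ∫ x, f x ∂P = 3⁻¹ * ∑ j, ∫ x, f (S j x) ∂P := by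
  have hmap : ∀ j, Integrable f (P.map (S j)) := fun j =>
    (hf.smul_measure (by norm_num)).mono_measure (hP.map_S_le j)
  have hint : ∀ j, ∫ x, f x ∂P.map (S j) = ∫ x, f (S j x) ∂P := fun j =>
    integral_map (continuous_S j).aemeasurable (hmap j).aestronglyMeasurable
  conv_lhs => rw [hP]
  rw [integral_smul_measure, integral_add_measure ((hmap 0).add_measure (hmap 1)) (hmap 2),
    integral_add_measure (hmap 0) (hmap 1), hint, hint, hint, Fin.sum_univ_three,
    ENNReal.toReal_inv, smul_eq_mul]
  norm_num

section Finite

variable [IsFiniteMeasure P]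

theorem measure_compl_Icc_eq_zero {ε : ℝ} (hε : 0 < ε) : P (Icc (-ε) (1 + ε))ᶜ = 0 := by
  set s : ℕ → Set ℝ := fun n => (Icc (-(5 ^ n * ε)) (1 + 5 ^ n * ε))ᶜ
  have hle : ∀ n, P (s 0) ≤ P (s n) := by
    intro n
    induction n with
    | zero => rfl
    | succ n ih =>
      refine ih.trans (hP.measure_le_of_preimage_subset isClosed_Icc.measurableSet.compl
        fun j => ?_)
      simpa [s, pow_succ, mul_comm, mul_assoc, mul_left_comm] using
        preimage_S_compl_Icc_subset j (5 ^ n * ε)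
  have hanti : Antitone s := fun m n hmn =>
    compl_subset_compl.2 (Icc_subset_Icc (by gcongr; norm_num) (by gcongr; norm_num))
  have hempty : ⋂ n, s n = ∅ := by
    refine eq_empty_of_forall_notMem fun x hx => ?_
    obtain ⟨n, hn⟩ := pow_unbounded_of_one_lt (|x| / ε) (by norm_num : (1 : ℝ) < 5)
    have hn' : |x| < 5 ^ n * ε := by rwa [div_lt_iff₀ hε] at hn
    exact mem_iInter.1 hx n ⟨by linarith [neg_abs_le x], by linarith [le_abs_self x]⟩
  have hlim := tendsto_measure_iInter_atTop
    (fun n => isClosed_Icc.measurableSet.compl.nullMeasurableSet) hanti ⟨0, measure_ne_top P _⟩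
  rw [hempty, measure_empty] at hlim
  simpa [s] using le_antisymm (ge_of_tendsto' hlim hle) zero_le

theorem ae_mem_Icc : ∀ᵐ x ∂P, x ∈ Icc (0 : ℝ) 1 := by
  have h : ∀ᵐ x ∂P, ∀ n : ℕ, x ∈ Icc (-(1 / ((n : ℝ) + 1))) (1 + 1 / ((n : ℝ) + 1)) :=
    ae_all_iff.2 fun n => mem_ae_iff.2 (hP.measure_compl_Icc_eq_zero Nat.one_div_pos_of_nat)
  filter_upwards [h] with x hx
  have hlim : Tendsto (fun n : ℕ => 1 / ((n : ℝ) + 1)) atTop (nhds 0) :=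
    tendsto_one_div_add_atTop_nhds_zero_nat
  exact ⟨le_of_tendsto' (by simpa using hlim.neg) fun n => (hx n).1,
    ge_of_tendsto' (by simpa using hlim.const_add 1) fun n => (hx n).2⟩

theorem integral_congr_Icc {f g : ℝ → ℝ} (h : ∀ x ∈ Icc (0 : ℝ) 1, f x = g x) :
    ∫ x, f x ∂P = ∫ x, g x ∂P :=
  integral_congr_ae (hP.ae_mem_Icc.mono h)

theorem integrable_of_continuous {f : ℝ → ℝ} (hf : Continuous f) : Integrable f P :=
  hf.integrable_of_ae_mem isCompact_Icc hP.ae_mem_Icc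

theorem setIntegral_J {g : ℝ → ℝ} (hg : Integrable g P) (j : Fin 3) :
    ∫ x in J j, g x ∂P = 3⁻¹ * ∫ x, g (S j x) ∂P := by
  have hterm : ∀ i, ∫ x, (J j).indicator g (S i x) ∂P = if i = j then ∫ x, g (S j x) ∂P else 0 := by
    intro i
    split_ifs with hij
    · subst hij
      exact hP.integral_congr_Icc fun x hx => indicator_of_mem ((S_mem_J_iff hx).2 rfl) g
    · rw [← integral_zero ℝ ℝ]
      exact hP.integral_congr_Icc fun x hx => indicator_of_notMem (mt (S_mem_J_iff hx).1 hij) g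
  rw [← integral_indicator (measurableSet_J j),
    hP.integral_eq_sum (hg.indicator (measurableSet_J j))]
  simp [hterm]

end Finite

variable [IsProbabilityMeasure P]

theorem integral_id : ∫ x, x ∂P = 1 / 2 := by
  have h1 := hP.integrable_of_continuous continuous_id'
  have h := hP.integral_eq_sum h1
  have hS : ∀ j, ∫ x, S j x ∂P = ((∫ x, x ∂P) + 2 * (j : ℝ)) / 5 := fun j => by
    simp_rw [S_eq_sub_div, integral_div,
      integral_sub_const_eq h1]
    ring
  simp only [hS, Fin.sum_univ_three] at h
  norm_num at h
  linarith

theorem integral_sq : ∫ x, x ^ 2 ∂P = 13 / 36 := by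
  have h1 := hP.integrable_of_continuous continuous_id'
  have h2 := hP.integrable_of_continuous (continuous_pow 2)
  have h := hP.integral_eq_sum h2
  simp_rw [S_eq_sub_div, div_pow, integral_div,
    integral_sq_sub_eq h1 h2, hP.integral_id, Fin.sum_univ_three] at h
  norm_num at h
  linarith

theorem integral_sq_sub (b : ℝ) : ∫ x, (x - b) ^ 2 ∂P = 1 / 9 + (1 / 2 - b) ^ 2 := by
  rw [integral_sq_sub_eq (hP.integrable_of_continuous continuous_id')
    (hP.integrable_of_continuous (continuous_pow 2)), hP.integral_sq, hP.integral_id]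
  ring

theorem integral_min_sq_sub_eq :
    ∫ x, min ((x - 9 / 50) ^ 2) ((x - 189 / 250) ^ 2) ∂P = 821 / 28125 := by
  set φ : ℝ → ℝ := fun x => min ((x - 9 / 50) ^ 2) ((x - 189 / 250) ^ 2)
  have hφc : Continuous φ := by fun_prop
  have left : ∀ y ≤ 117 / 250, φ y = (y - 9 / 50) ^ 2 := fun y hy =>
    min_sq_sub_eq_left (by norm_num) (by linarith)
  have right : ∀ y ≥ 117 / 250, φ y = (y - 189 / 250) ^ 2 := fun y hy =>
    min_sq_sub_eq_right (by norm_num) (by linarith)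
  -- The midpoint `117/250` of the two centres lies in the gap between `S 1 (S 0 [0,1])` and
  -- `S 1 (S 1 [0,1])`, so on each of these five pieces one centre is the nearer.
  have h0 : ∫ x, φ (S 0 x) ∂P = ∫ x, (S 0 x - 9 / 50) ^ 2 ∂P :=
    hP.integral_congr_Icc fun x hx => left _ (by simp [S]; linarith [hx.2])
  have h2 : ∫ x, φ (S 2 x) ∂P = ∫ x, (S 2 x - 189 / 250) ^ 2 ∂P :=
    hP.integral_congr_Icc fun x hx => right _ (by simp [S]; linarith [hx.1])
  have h10 : ∫ x, φ (S 1 (S 0 x)) ∂P = ∫ x, (S 1 (S 0 x) - 9 / 50) ^ 2 ∂P :=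
    hP.integral_congr_Icc fun x hx => left _ (by simp [S]; linarith [hx.2])
  have h11 : ∫ x, φ (S 1 (S 1 x)) ∂P = ∫ x, (S 1 (S 1 x) - 189 / 250) ^ 2 ∂P :=
    hP.integral_congr_Icc fun x hx => right _ (by simp [S]; linarith [hx.1])
  have h12 : ∫ x, φ (S 1 (S 2 x)) ∂P = ∫ x, (S 1 (S 2 x) - 189 / 250) ^ 2 ∂P :=
    hP.integral_congr_Icc fun x hx => right _ (by simp [S]; linarith [hx.1])
  rw [hP.integral_eq_sum (hP.integrable_of_continuous hφc), Fin.sum_univ_three,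
    hP.integral_eq_sum (f := fun x => φ (S 1 x))
      (hP.integrable_of_continuous (hφc.comp (continuous_S 1))),
    Fin.sum_univ_three, h0, h2, h10, h11, h12]
  simp only [S_sub_eq, div_pow, integral_div, hP.integral_sq_sub]
  norm_num

end IsTriadicCantor

theorem stmt7 (P : Measure ℝ) [IsProbabilityMeasure P] (hP : IsTriadicCantor P)
    (j : Fin 3) :
    ∫ x in J j, (⨅ a : (S j '' ({9 / 50, 189 / 250} : Set ℝ)), (x - (a : ℝ)) ^ 2) ∂P
      = (821 / 28125) / 75 := by
  have hpair : ∀ x, ⨅ a : (S j '' ({9 / 50, 189 / 250} : Set ℝ)), (x - (a : ℝ)) ^ 2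
      = min ((x - S j (9 / 50)) ^ 2) ((x - S j (189 / 250)) ^ 2) := fun x => by
    rw [image_pair]
    exact ciInf_pair (fun a => (x - a) ^ 2) _ _
  simp_rw [hpair]
  rw [hP.setIntegral_J (hP.integrable_of_continuous (by fun_prop))]
  simp_rw [S_sub_S, div_pow, min_div_div_right (by norm_num : (0 : ℝ) ≤ 5 ^ 2), integral_div,
    hP.integral_min_sq_sub_eq]
  norm_num
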